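/- Let φ be either the symmetric linear-core surrogate Φ̄ or the one-sided linear-core surrogate Φ̃. For all real numbers a ≥ b ≥ 0 and every m ≤ 0, the pairwise regret satisfies a·φ(m) + b·φ(−m) − inf_{u ∈ ℝ} ( a·φ(u) + b·φ(−u) ) ≥ (a − b)·(1 − m); in particular it is at least a − b. -/

import Mathlib

/-- The symmetric linear-core surrogate `Φ̄`. -/
noncomputable def barPhi (Φ : ℝ → ℝ) (u : ℝ) : ℝ :=
  if 1 < u then Φ (1 - u) / deriv Φ 0
  else if u < -1 then Φ (-1 - u) / deriv Φ 0 + 2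
  else -u + 1 + Φ 0 / deriv Φ 0

/-- The one-sided linear-core surrogate `Φ̃`. -/
noncomputable def tildePhi (Φ : ℝ → ℝ) (u : ℝ) : ℝ :=
  if 1 < u then Φ (1 - u) / deriv Φ 0
  else -u + 1 + Φ 0 / deriv Φ 0

/-!
Both surrogates lie above their linear core `u ↦ -u + 1 + c`, `c = Φ(0)/Φ'(0)`: off the core they
are rescaled, shifted copies of `Φ`, and the tangent line of `Φ` at `0` lies below `Φ`. They are
nonnegative and agree with the core at `u = ±1`. Hence the infimum of `a φ(u) + b φ(-u)` is at most
its value `a c + b (2 + c)` at `u = 1`, while `a φ(m) + b φ(-m)` is at least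
`a (-m + 1 + c) + b (m + 1 + c)`; the difference of these bounds is exactly `(a - b)(1 - m)`.
-/

theorem ConvexOn.add_deriv_mul_sub_le {S : Set ℝ} {f : ℝ → ℝ} {x y : ℝ} (hf : ConvexOn ℝ S f)
    (hx : x ∈ S) (hy : y ∈ S) (hfx : DifferentiableAt ℝ f x) :
    f x + deriv f x * (y - x) ≤ f y := by
  rcases lt_trichotomy y x with hyx | rfl | hxy
  · have h := hf.slope_le_deriv hy hx hyx hfx
    rw [slope_def_field, div_le_iff₀ (sub_pos.mpr hyx)] at h
    linarith
  · simp
  · have h := hf.deriv_le_slope hx hy hxy hfx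
    rw [slope_def_field, le_div_iff₀ (sub_pos.mpr hxy)] at h
    linarith

theorem div_deriv_add_le_div_deriv {Φ : ℝ → ℝ} (hconv : ConvexOn ℝ Set.univ Φ)
    (hdiff : DifferentiableAt ℝ Φ 0) (hd0 : 0 < deriv Φ 0) (t : ℝ) :
    Φ 0 / deriv Φ 0 + t ≤ Φ t / deriv Φ 0 := by
  have h := hconv.add_deriv_mul_sub_le (Set.mem_univ 0) (Set.mem_univ t) hdiff
  rw [div_add' _ _ _ hd0.ne', div_le_div_iff_of_pos_right hd0]
  linarith

section Surrogates

variable {Φ : ℝ → ℝ}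

theorem linearCore_le_barPhi (hconv : ConvexOn ℝ Set.univ Φ) (hdiff : DifferentiableAt ℝ Φ 0)
    (hd0 : 0 < deriv Φ 0) (u : ℝ) : -u + 1 + Φ 0 / deriv Φ 0 ≤ barPhi Φ u := by
  unfold barPhi
  split_ifs
  · linarith [div_deriv_add_le_div_deriv hconv hdiff hd0 (1 - u)]
  · linarith [div_deriv_add_le_div_deriv hconv hdiff hd0 (-1 - u)]
  · rfl

theorem linearCore_le_tildePhi (hconv : ConvexOn ℝ Set.univ Φ) (hdiff : DifferentiableAt ℝ Φ 0)
    (hd0 : 0 < deriv Φ 0) (u : ℝ) : -u + 1 + Φ 0 / deriv Φ 0 ≤ tildePhi Φ u := by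
  unfold tildePhi
  split_ifs
  · linarith [div_deriv_add_le_div_deriv hconv hdiff hd0 (1 - u)]
  · rfl

theorem barPhi_nonneg (hnn : ∀ u, 0 ≤ Φ u) (hd0 : 0 ≤ deriv Φ 0) (u : ℝ) : 0 ≤ barPhi Φ u := by
  have hdiv : ∀ t, 0 ≤ Φ t / deriv Φ 0 := fun t => div_nonneg (hnn t) hd0
  unfold barPhi
  split_ifs with h1
  · exact hdiv _
  · linarith [hdiv (-1 - u)]
  · linarith [hdiv 0, not_lt.mp h1]

theorem tildePhi_nonneg (hnn : ∀ u, 0 ≤ Φ u) (hd0 : 0 ≤ deriv Φ 0) (u : ℝ) :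
    0 ≤ tildePhi Φ u := by
  have hdiv : ∀ t, 0 ≤ Φ t / deriv Φ 0 := fun t => div_nonneg (hnn t) hd0
  unfold tildePhi
  split_ifs with h1
  · exact hdiv _
  · linarith [hdiv 0, not_lt.mp h1]

theorem barPhi_one : barPhi Φ 1 = Φ 0 / deriv Φ 0 := by
  norm_num [barPhi]

theorem barPhi_neg_one : barPhi Φ (-1) = 2 + Φ 0 / deriv Φ 0 := by
  norm_num [barPhi]

theorem tildePhi_one : tildePhi Φ 1 = Φ 0 / deriv Φ 0 := by
  norm_num [tildePhi]

theorem tildePhi_neg_one : tildePhi Φ (-1) = 2 + Φ 0 / deriv Φ 0 := by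
  norm_num [tildePhi]

end Surrogates

theorem sub_mul_one_sub_le_pairwise_regret {φ : ℝ → ℝ} {c a b : ℝ}
    (hcore : ∀ u, -u + 1 + c ≤ φ u) (hnn : ∀ u, 0 ≤ φ u) (h1 : φ 1 = c) (hm1 : φ (-1) = 2 + c)
    (ha : 0 ≤ a) (hb : 0 ≤ b) (m : ℝ) :
    (a - b) * (1 - m) ≤ a * φ m + b * φ (-m) - ⨅ u : ℝ, (a * φ u + b * φ (-u)) := by
  have hbdd : BddBelow (Set.range fun u => a * φ u + b * φ (-u)) :=
    ⟨0, by rintro _ ⟨u, rfl⟩; have := hnn u; have := hnn (-u); positivity⟩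
  have hinf : (⨅ u : ℝ, (a * φ u + b * φ (-u))) ≤ a * c + b * (2 + c) := by
    simpa [h1, hm1] using ciInf_le hbdd 1
  have hm : a * (-m + 1 + c) ≤ a * φ m := mul_le_mul_of_nonneg_left (hcore m) ha
  have hnegm : b * (m + 1 + c) ≤ b * φ (-m) := by
    simpa using mul_le_mul_of_nonneg_left (hcore (-m)) hb
  linarith

/-- for `φ ∈ {Φ̄, Φ̃}`, `a ≥ b ≥ 0` and `m ≤ 0`, the pairwise regret
`a·φ(m) + b·φ(-m) - inf_u (a·φ(u) + b·φ(-u))` is at least `(a - b)·(1 - m)`, and in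
particular at least `a - b`. -/
theorem pairwise_regret_lower_bound (Φ : ℝ → ℝ)
    (hconv : ConvexOn ℝ Set.univ Φ) (hdiff : Differentiable ℝ Φ)
    (hnn : ∀ u, 0 ≤ Φ u) (hd0 : 0 < deriv Φ 0)
    (φ : ℝ → ℝ) (hφ : φ = barPhi Φ ∨ φ = tildePhi Φ)
    (a b : ℝ) (hb : 0 ≤ b) (hab : b ≤ a) (m : ℝ) (hm : m ≤ 0) :
    (a - b) * (1 - m) ≤
      a * φ m + b * φ (-m) - ⨅ u : ℝ, (a * φ u + b * φ (-u)) ∧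
    a - b ≤ a * φ m + b * φ (-m) - ⨅ u : ℝ, (a * φ u + b * φ (-u)) := by
  have hregret : (a - b) * (1 - m) ≤ a * φ m + b * φ (-m) - ⨅ u : ℝ, (a * φ u + b * φ (-u)) := by
    rcases hφ with rfl | rfl
    · exact sub_mul_one_sub_le_pairwise_regret (linearCore_le_barPhi hconv (hdiff 0) hd0)
        (barPhi_nonneg hnn hd0.le) barPhi_one barPhi_neg_one (hb.trans hab) hb m
    · exact sub_mul_one_sub_le_pairwise_regret (linearCore_le_tildePhi hconv (hdiff 0) hd0)
        (tildePhi_nonneg hnn hd0.le) tildePhi_one tildePhi_neg_one (hb.trans hab) hb m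
  exact ⟨hregret, (le_mul_of_one_le_right (sub_nonneg.2 hab) (by linarith)).trans hregret⟩
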